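/- Let n ∈ ℕ and define H(s;θ) = ∫_0^{−θ} exp(πi(n+2)(s+t))·G_n(s+t) dt. For every θ with 0 ≤ θ ≤ 1/2 and every s with θ − 1/2 ≤ s < 0, one has |Re H(s;θ)| ≤ θ/2 + (1/(4(2n+3)))·(1/2 + 1/π)·( 1/(−s) + 1/(θ−s) ). -/

import Mathlib

open scoped Classical

/-- `G_n(x) = sin((n+1)πx)/sin(πx)` for `x ∉ ℤ`, continuously extended by `G_n(x) = n+1`
for `x ∈ ℤ`. -/
noncomputable def G (n : ℕ) (x : ℝ) : ℝ :=
  if ∃ m : ℤ, x = (m : ℝ) then (n : ℝ) + 1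
  else Real.sin (((n : ℝ) + 1) * Real.pi * x) / Real.sin (Real.pi * x)

/-- `H(s;θ) = ∫_0^{−θ} e^{πi(n+2)(s+t)} G_n(s+t) dt`. -/
noncomputable def Hfun (n : ℕ) (s θ : ℝ) : ℂ :=
  ∫ t in (0 : ℝ)..(-θ),
    Complex.exp ((Real.pi : ℂ) * Complex.I * ((n : ℂ) + 2) * ((s : ℂ) + (t : ℂ))) *
      Complex.ofReal (G n (s + t))

/-!
On `[s - θ, s] ⊂ [-1/2, 0)` the integrand has real part `sin((2n+3)πx) / (2 sin πx) - 1/2`, so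
after the substitution `x = s + t`, `Re H(s;θ) = θ/2 - ∫_{s-θ}^{s} sin((2n+3)πx) / (2 sin πx) dx`.
Integrating by parts against `-cos((2n+3)πx) / ((2n+3)π)` and using Jordan's inequality
`|sin πx| ≥ 2|x|`, the boundary terms are at most `1 / (4(2n+3)π|x|)` and the remaining integral is
at most `∫ 1 / (8(2n+3)x²) dx`.
-/

open Real Set MeasureTheory intervalIntegral

lemma sin_pi_mul_le_two_mul {x : ℝ} (h₁ : -(1 / 2) ≤ x) (h₂ : x ≤ 0) : sin (π * x) ≤ 2 * x := by
  have h := mul_le_sin (x := π * -x) (by nlinarith [pi_pos]) (by nlinarith [pi_pos])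
  rwa [mul_neg, sin_neg, show 2 / π * -(π * x) = -(2 * x) by field_simp, neg_le_neg_iff]
    at h

lemma two_mul_abs_le_abs_sin_pi_mul {x : ℝ} (h₁ : -(1 / 2) ≤ x) (h₂ : x ≤ 0) :
    2 * |x| ≤ |sin (π * x)| := by
  have := sin_pi_mul_le_two_mul h₁ h₂
  rw [abs_of_nonpos h₂, abs_of_nonpos (by linarith)]
  linarith

lemma sin_pi_mul_neg {x : ℝ} (h₁ : -1 < x) (h₂ : x < 0) : sin (π * x) < 0 :=
  sin_neg_of_neg_of_neg_pi_lt (by nlinarith [pi_pos]) (by nlinarith [pi_pos])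

lemma G_of_sin_ne_zero {n : ℕ} {x : ℝ} (h : sin (π * x) ≠ 0) :
    G n x = sin ((n + 1) * π * x) / sin (π * x) := by
  rw [G, if_neg]
  rintro ⟨m, rfl⟩
  exact h (by rw [mul_comm]; exact sin_int_mul_pi m)

lemma continuousOn_G (n : ℕ) : ContinuousOn (G n) {x | sin (π * x) ≠ 0} :=
  (ContinuousOn.div (by fun_prop) (by fun_prop) fun _ hx ↦ hx).congr
    fun _ hx ↦ G_of_sin_ne_zero hx

lemma re_exp_mul_G {n : ℕ} {x : ℝ} (h : sin (π * x) ≠ 0) :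
    (Complex.exp (π * Complex.I * (n + 2) * x) * G n x).re =
      sin ((2 * n + 3) * π * x) / (2 * sin (π * x)) - 1 / 2 := by
  have harg : (π : ℂ) * Complex.I * (n + 2) * x = ((n + 2) * π * x : ℝ) * Complex.I := by
    push_cast; ring
  have hprod : sin ((2 * n + 3) * π * x) =
      2 * sin ((n + 1) * π * x) * cos ((n + 2) * π * x) + sin (π * x) := by
    rw [two_mul_sin_mul_cos, show (n + 1) * π * x - (n + 2) * π * x = -(π * x) by ring,
      show (n + 1) * π * x + (n + 2) * π * x = (2 * n + 3) * π * x by ring, sin_neg]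
    ring
  rw [harg, Complex.re_mul_ofReal, Complex.exp_ofReal_mul_I_re, G_of_sin_ne_zero h, hprod]
  field_simp
  ring

lemma Hfun_eq_neg_integral (n : ℕ) (s θ : ℝ) :
    Hfun n s θ = -∫ x in (s - θ)..s, Complex.exp (π * Complex.I * (n + 2) * x) * G n x := by
  simp_rw [Hfun, ← Complex.ofReal_add]
  rw [integral_comp_add_left (fun x : ℝ ↦ Complex.exp (π * Complex.I * (n + 2) * x) * G n x),
    add_zero, ← sub_eq_add_neg, integral_symm]

lemma Hfun_re_eq {n : ℕ} {s θ : ℝ} (h : ∀ x ∈ uIcc (s - θ) s, sin (π * x) ≠ 0) :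
    (Hfun n s θ).re = θ / 2 - ∫ x in (s - θ)..s, sin ((2 * n + 3) * π * x) / (2 * sin (π * x)) := by
  have hint : IntervalIntegrable (fun x : ℝ ↦ Complex.exp (π * Complex.I * (n + 2) * x) * G n x)
      volume (s - θ) s :=
    (ContinuousOn.mul (by fun_prop)
      (Complex.continuous_ofReal.comp_continuousOn ((continuousOn_G n).mono h))).intervalIntegrable
  have hosc : IntervalIntegrable (fun x ↦ sin ((2 * n + 3) * π * x) / (2 * sin (π * x)))
      volume (s - θ) s :=
    (ContinuousOn.div (by fun_prop) (by fun_prop)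
      fun x hx ↦ mul_ne_zero two_ne_zero (h x hx)).intervalIntegrable
  rw [Hfun_eq_neg_integral, Complex.neg_re, ← RCLike.re_to_complex, ← intervalIntegral_re hint]
  simp only [RCLike.re_to_complex]
  rw [integral_congr fun x hx ↦ re_exp_mul_G (h x hx), integral_sub hosc intervalIntegrable_const,
    intervalIntegral.integral_const, smul_eq_mul]
  ring

lemma abs_integral_mul_deriv_le {u u' v v' g : ℝ → ℝ} {a b M : ℝ} (hab : a ≤ b)
    (hu : ∀ x ∈ Icc a b, HasDerivAt u (u' x) x) (hv : ∀ x ∈ Icc a b, HasDerivAt v (v' x) x)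
    (hu' : IntervalIntegrable u' volume a b) (hv' : IntervalIntegrable v' volume a b)
    (hvM : ∀ x ∈ Icc a b, |v x| ≤ M) (hu'g : ∀ x ∈ Icc a b, |u' x| ≤ g x)
    (hg : IntervalIntegrable g volume a b) :
    |∫ x in a..b, u x * v' x| ≤ M * (|u a| + |u b| + ∫ x in a..b, g x) := by
  rw [← uIcc_of_le hab] at hu hv hvM hu'g
  have hM : 0 ≤ M := (abs_nonneg _).trans (hvM a left_mem_uIcc)
  have hboundary : ∀ x ∈ uIcc a b, |u x * v x| ≤ M * |u x| := fun x hx ↦ by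
    rw [abs_mul, mul_comm]; exact mul_le_mul_of_nonneg_right (hvM x hx) (abs_nonneg _)
  have hremainder : |∫ x in a..b, u' x * v x| ≤ M * ∫ x in a..b, g x := by
    rw [← intervalIntegral.integral_const_mul, ← Real.norm_eq_abs]
    refine norm_integral_le_of_norm_le hab (ae_of_all _ fun x hx ↦ ?_) (hg.const_mul M)
    have hx : x ∈ uIcc a b := by rw [uIcc_of_le hab]; exact Ioc_subset_Icc_self hx
    rw [Real.norm_eq_abs, abs_mul, mul_comm]
    exact mul_le_mul (hvM x hx) (hu'g x hx) (abs_nonneg _) hM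
  rw [integral_mul_deriv_eq_deriv_mul hu hv hu' hv']
  have := hboundary a left_mem_uIcc
  have := hboundary b right_mem_uIcc
  have := abs_sub (u b * v b - u a * v a) (∫ x in a..b, u' x * v x)
  have := abs_sub (u b * v b) (u a * v a)
  linarith

lemma abs_inv_two_sin_pi_mul_le {x : ℝ} (h₁ : -(1 / 2) ≤ x) (h₂ : x < 0) :
    |(2 * sin (π * x))⁻¹| ≤ 1 / (4 * -x) := by
  have := two_mul_abs_le_abs_sin_pi_mul h₁ h₂.le
  rw [abs_of_neg h₂] at this
  rw [abs_inv, abs_mul, abs_two, one_div]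
  exact inv_anti₀ (by linarith) (by linarith)

lemma abs_deriv_inv_two_sin_pi_mul_le {x : ℝ} (h₁ : -(1 / 2) ≤ x) (h₂ : x < 0) :
    |-(2 * (cos (π * x) * π)) / (2 * sin (π * x)) ^ 2| ≤ π / 8 * x ^ (-2 : ℤ) := by
  have hsin := two_mul_abs_le_abs_sin_pi_mul h₁ h₂.le
  have hx : 0 < |x| := abs_pos.2 h₂.ne
  rw [abs_div, abs_neg, abs_pow, abs_mul, abs_mul, abs_mul, abs_two, abs_of_pos pi_pos]
  calc 2 * (|cos (π * x)| * π) / (2 * |sin (π * x)|) ^ 2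
      ≤ 2 * (1 * π) / (2 * (2 * |x|)) ^ 2 := by gcongr; exact abs_cos_le_one _
    _ = π / 8 * x ^ (-2 : ℤ) := by
      rw [zpow_neg, zpow_ofNat, ← sq_abs x]
      field_simp
      ring

lemma hasDerivAt_inv_two_sin_pi_mul {x : ℝ} (h : sin (π * x) ≠ 0) :
    HasDerivAt (fun x ↦ (2 * sin (π * x))⁻¹)
      (-(2 * (cos (π * x) * π)) / (2 * sin (π * x)) ^ 2) x := by
  simpa only [mul_one] using
    (((hasDerivAt_id' x).const_mul π).sin.const_mul 2).fun_inv (mul_ne_zero two_ne_zero h)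

lemma hasDerivAt_neg_cos_mul_div {c : ℝ} (hc : c ≠ 0) (x : ℝ) :
    HasDerivAt (fun x ↦ -cos (c * x) / c) (sin (c * x)) x :=
  ((((hasDerivAt_id' x).const_mul c).cos.neg).div_const c).congr_deriv (by field_simp)

lemma abs_neg_cos_mul_div_le {c : ℝ} (hc : 0 < c) (x : ℝ) : |-cos (c * x) / c| ≤ 1 / c := by
  rw [abs_div, abs_neg, abs_of_pos hc]
  exact div_le_div_of_nonneg_right (abs_cos_le_one _) hc.le

lemma integral_zpow_neg_two {a b : ℝ} (h : (0 : ℝ) ∉ uIcc a b) :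
    ∫ x in a..b, x ^ (-2 : ℤ) = a⁻¹ - b⁻¹ := by
  rw [integral_zpow (Or.inr ⟨by norm_num, h⟩)]
  norm_num
  ring

lemma abs_integral_sin_div_two_sin_le {N a b : ℝ} (hN : 0 < N) (ha : -(1 / 2) ≤ a) (hab : a ≤ b)
    (hb : b < 0) :
    |∫ x in a..b, sin (N * π * x) / (2 * sin (π * x))| ≤
      1 / (4 * N) * (1 / 2 + 1 / π) * (1 / (-a) + 1 / (-b)) := by
  have hmem : ∀ x ∈ Icc a b, -(1 / 2) ≤ x ∧ x < 0 := fun x hx ↦ ⟨ha.trans hx.1, hx.2.trans_lt hb⟩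
  have hsin : ∀ x ∈ uIcc a b, sin (π * x) ≠ 0 := fun x hx ↦ by
    rw [uIcc_of_le hab] at hx
    exact (sin_pi_mul_neg (by linarith [hmem x hx]) (hmem x hx).2).ne
  have hu' : IntervalIntegrable (fun x ↦ -(2 * (cos (π * x) * π)) / (2 * sin (π * x)) ^ 2)
      volume a b :=
    (ContinuousOn.div (by fun_prop) (by fun_prop) fun x hx ↦
      pow_ne_zero 2 (mul_ne_zero two_ne_zero (hsin x hx))).intervalIntegrable
  have hg : IntervalIntegrable (fun x ↦ π / 8 * x ^ (-2 : ℤ)) volume a b :=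
    (continuousOn_const.mul (continuousOn_id.zpow₀ _ fun x hx ↦
      Or.inl (hmem x (uIcc_of_le hab ▸ hx)).2.ne)).intervalIntegrable
  have hIBP := abs_integral_mul_deriv_le hab
    (fun x hx ↦ hasDerivAt_inv_two_sin_pi_mul (hsin x (uIcc_of_le hab ▸ hx)))
    (fun x _ ↦ hasDerivAt_neg_cos_mul_div (c := N * π) (by positivity) x) hu'
    ((by fun_prop : Continuous _).intervalIntegrable _ _)
    (fun x _ ↦ abs_neg_cos_mul_div_le (c := N * π) (by positivity) x)
    (fun x hx ↦ abs_deriv_inv_two_sin_pi_mul_le (hmem x hx).1 (hmem x hx).2) hg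
  rw [intervalIntegral.integral_const_mul,
    integral_zpow_neg_two fun h ↦ (hsin 0 h) (by simp)] at hIBP
  have hua := abs_inv_two_sin_pi_mul_le ha (hab.trans_lt hb)
  have hub := abs_inv_two_sin_pi_mul_le (ha.trans hab) hb
  -- The remainder `(1/(-b) - 1/(-a)) / (8N)` is absorbed by `(1/(-a) + 1/(-b)) / (8N)`.
  have hslack : 1 / (4 * N) * (1 / 2 + 1 / π) * (1 / (-a) + 1 / (-b)) -
      1 / (N * π) * (1 / (4 * -a) + 1 / (4 * -b) + π / 8 * (a⁻¹ - b⁻¹)) =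
        1 / (4 * N) * (1 / (-a)) := by
    have : a ≠ 0 := by linarith
    have : b ≠ 0 := by linarith
    field_simp
    ring
  calc |∫ x in a..b, sin (N * π * x) / (2 * sin (π * x))|
      = |∫ x in a..b, (2 * sin (π * x))⁻¹ * sin (N * π * x)| := by simp only [div_eq_inv_mul]
    _ ≤ 1 / (N * π) * (1 / (4 * -a) + 1 / (4 * -b) + π / 8 * (a⁻¹ - b⁻¹)) :=
      hIBP.trans (by gcongr)
    _ ≤ 1 / (4 * N) * (1 / 2 + 1 / π) * (1 / (-a) + 1 / (-b)) := by
      rw [← sub_nonneg, hslack]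
      exact mul_nonneg (by positivity) (one_div_nonneg.2 (by linarith))

theorem Hfun_re_bound_neg_general (n : ℕ) (s θ : ℝ)
    (hθ0 : 0 ≤ θ) (hs0 : θ - 1 / 2 ≤ s) (hs1 : s < 0) :
    |(Hfun n s θ).re| ≤ θ / 2 +
      (1 / (4 * (2 * (n : ℝ) + 3))) * (1 / 2 + 1 / Real.pi) *
        (1 / (-s) + 1 / (θ - s)) := by
  have hsin : ∀ x ∈ uIcc (s - θ) s, sin (π * x) ≠ 0 := fun x hx ↦ by
    rw [uIcc_of_le (by linarith)] at hx
    exact (sin_pi_mul_neg (by linarith [hx.1]) (hx.2.trans_lt hs1)).ne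
  have hosc := abs_integral_sin_div_two_sin_le (N := 2 * n + 3) (by positivity) (by linarith)
    (by linarith : s - θ ≤ s) hs1
  rw [neg_sub, add_comm (1 / (θ - s))] at hosc
  rw [Hfun_re_eq hsin]
  calc _ ≤ |θ / 2| + |∫ x in (s - θ)..s, sin ((2 * n + 3) * π * x) / (2 * sin (π * x))| :=
        abs_sub _ _
    _ ≤ _ := by rw [abs_of_nonneg (by linarith)]; linarith

/-- Bound on the real part of `H(s;θ)` for `0 ≤ θ ≤ 1/2` and `θ − 1/2 ≤ s < 0`:
`|Re H(s;θ)| ≤ θ/2 + (1/(4(2n+3)))(1/2 + 1/π)(1/(−s) + 1/(θ−s))`. -/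
theorem Hfun_re_bound_neg (n : ℕ) (s θ : ℝ)
    (hθ0 : 0 ≤ θ) (hθ1 : θ ≤ 1 / 2) (hs0 : θ - 1 / 2 ≤ s) (hs1 : s < 0) :
    |(Hfun n s θ).re| ≤ θ / 2 +
      (1 / (4 * (2 * (n : ℝ) + 3))) * (1 / 2 + 1 / Real.pi) *
        (1 / (-s) + 1 / (θ - s)) :=
  Hfun_re_bound_neg_general n s θ hθ0 hs0 hs1
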